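/- arXiv:2108.00558 — 3 statements merged into one kernel-verified Lean document; each statement's English description precedes it below -/
import Mathlib

section
/- Every regular Z^{2*}-measurable set has boundary equal to a disjoint union of images of simple paths in the lattice graph (Z^2, E^2); moreover every such boundary path of finite length is a closed path. -/
noncomputable section

/-- Embed a lattice point of `ℤ²` into the Euclidean plane. -/
def latPt (z : ℤ × ℤ) : EuclideanSpace ℝ (Fin 2) :=
  (WithLp.equiv 2 (Fin 2 → ℝ)).symm ![(z.1 : ℝ), (z.2 : ℝ)]

/-- The dual lattice point `z + (1/2, 1/2)` associated with `z ∈ ℤ²`. -/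
def dualPt (z : ℤ × ℤ) : EuclideanSpace ℝ (Fin 2) :=
  (WithLp.equiv 2 (Fin 2 → ℝ)).symm ![(z.1 : ℝ) + 1/2, (z.2 : ℝ) + 1/2]

/-- The closed unit cube centered at the dual lattice point indexed by `z`. -/
def latCube (z : ℤ × ℤ) : Set (EuclideanSpace ℝ (Fin 2)) :=
  {x | ∀ i : Fin 2, |x i - dualPt z i| ≤ 1/2}

/-- `A` is the `ℤ^{2*}`-measurable set determined by the index set `Z`. -/
def IsZstarMeasurable (A : Set (EuclideanSpace ℝ (Fin 2))) (Z : Set (ℤ × ℤ)) : Prop :=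
  A = ⋃ z ∈ Z, latCube z

/-- Dual points are neighbors: equal or at (graph) distance one. -/
def Nbr (z z' : ℤ × ℤ) : Prop := z = z' ∨ |z.1 - z'.1| + |z.2 - z'.2| = 1

/-- Dual points are wired neighbors: `‖z - z'‖_{ℓ∞} ≤ 1`. -/
def WiredNbr (z z' : ℤ × ℤ) : Prop := |z.1 - z'.1| ≤ 1 ∧ |z.2 - z'.2| ≤ 1

/-- `z` indexes a boundary cube of `A`. -/
def IsBdryCube (A : Set (EuclideanSpace ℝ (Fin 2))) (Z : Set (ℤ × ℤ)) (z : ℤ × ℤ) : Prop :=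
  z ∈ Z ∧ (latCube z ∩ frontier A).Nonempty

/-- `z` indexes an interior cube of `A`. -/
def IsIntCube (A : Set (EuclideanSpace ℝ (Fin 2))) (Z : Set (ℤ × ℤ)) (z : ℤ × ℤ) : Prop :=
  z ∈ Z ∧ latCube z ⊆ interior A

/-- Regularity of a `ℤ^{2*}`-measurable set: (i) every boundary cube has an interior
cube among its wired neighbors; (ii) any two wired-neighbor boundary cubes have a cube
of `A` neighboring both. -/
def IsRegularZstar (A : Set (EuclideanSpace ℝ (Fin 2))) (Z : Set (ℤ × ℤ)) : Prop :=
  IsZstarMeasurable A Z ∧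
  (∀ z, IsBdryCube A Z z → ∃ z', WiredNbr z z' ∧ IsIntCube A Z z') ∧
  (∀ z z', IsBdryCube A Z z → IsBdryCube A Z z' → WiredNbr z z' →
    ∃ z'' ∈ Z, Nbr z'' z ∧ Nbr z'' z')

/-- `γ : E → ℤ²` is a path in the lattice graph `(ℤ², 𝔼²)`: `E` is an interval of `ℤ`
and consecutive vertices are adjacent. -/
def IsLatticePath (E : Set ℤ) (γ : ℤ → ℤ × ℤ) : Prop :=
  E.Nonempty ∧ E.OrdConnected ∧
  ∀ i : ℤ, i ∈ E → i + 1 ∈ E →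
    |(γ (i+1)).1 - (γ i).1| + |(γ (i+1)).2 - (γ i).2| = 1

/-- A simple path: injective except possibly at the two endpoints. -/
def IsSimplePath (E : Set ℤ) (γ : ℤ → ℤ × ℤ) : Prop :=
  ∀ i ∈ E, ∀ j ∈ E, i < j → γ i = γ j → IsLeast E i ∧ IsGreatest E j

/-- A closed path: finite with coinciding endpoints. -/
def IsClosedPath (E : Set ℤ) (γ : ℤ → ℤ × ℤ) : Prop :=
  ∃ i j : ℤ, IsLeast E i ∧ IsGreatest E j ∧ γ i = γ j

/-- The trace of a lattice path: the union of the unit segments it traverses. -/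
def pathTrace (E : Set ℤ) (γ : ℤ → ℤ × ℤ) : Set (EuclideanSpace ℝ (Fin 2)) :=
  ⋃ i ∈ {i : ℤ | i ∈ E ∧ i + 1 ∈ E}, segment ℝ (latPt (γ i)) (latPt (γ (i+1)))

set_option maxRecDepth 10000

lemma latPt0 (z : ℤ × ℤ) : latPt z 0 = z.1 := by
  simp [latPt, WithLp.equiv_symm_apply, PiLp.toLp_apply]
lemma latPt1 (z : ℤ × ℤ) : latPt z 1 = z.2 := by
  simp [latPt, WithLp.equiv_symm_apply, PiLp.toLp_apply]
lemma dualPt0 (z : ℤ × ℤ) : dualPt z 0 = z.1 + 1/2 := by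
  simp [dualPt, WithLp.equiv_symm_apply, PiLp.toLp_apply]
lemma dualPt1 (z : ℤ × ℤ) : dualPt z 1 = z.2 + 1/2 := by
  simp [dualPt, WithLp.equiv_symm_apply, PiLp.toLp_apply]

lemma mem_latCube (z : ℤ × ℤ) (x : EuclideanSpace ℝ (Fin 2)) :
    x ∈ latCube z ↔ ((z.1:ℝ) ≤ x 0 ∧ x 0 ≤ z.1+1 ∧ (z.2:ℝ) ≤ x 1 ∧ x 1 ≤ z.2+1) := by
  constructor
  · intro h
    have h0 := h 0; have h1 := h 1
    rw [dualPt0] at h0; rw [dualPt1] at h1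
    rw [abs_le] at h0 h1
    refine ⟨by linarith [h0.1], by linarith [h0.2], by linarith [h1.1], by linarith [h1.2]⟩
  · rintro ⟨a,b,c,d⟩ i
    fin_cases i
    · rw [show ((⟨0,by norm_num⟩ : Fin 2)) = (0 : Fin 2) from rfl, dualPt0, abs_le]
      constructor <;> linarith
    · rw [show ((⟨1,by norm_num⟩ : Fin 2)) = (1 : Fin 2) from rfl, dualPt1, abs_le]
      constructor <;> linarith

lemma coord_abs_le_dist (x y : EuclideanSpace ℝ (Fin 2)) (i : Fin 2) :
    |x i - y i| ≤ dist x y := by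
  rw [EuclideanSpace.dist_eq]
  rw [show |x i - y i| = Real.sqrt ((x i - y i)^2) from (Real.sqrt_sq_eq_abs _).symm]
  apply Real.sqrt_le_sqrt
  have := Finset.single_le_sum (f := fun j => dist (x j) (y j)^2)
    (fun j _ => sq_nonneg _) (Finset.mem_univ i)
  simpa [Real.dist_eq] using this

lemma dist_le_one_of_coords (x y : EuclideanSpace ℝ (Fin 2))
    (h0 : |x 0 - y 0| ≤ 1/2) (h1 : |x 1 - y 1| ≤ 1/2) : dist x y ≤ 1 := by
  rw [EuclideanSpace.dist_eq, Fin.sum_univ_two]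
  rw [show (1:ℝ) = Real.sqrt 1 from (Real.sqrt_one).symm]
  apply Real.sqrt_le_sqrt
  have e0 : dist (x 0) (y 0) ^ 2 ≤ (1/2)^2 := by
    rw [Real.dist_eq]; nlinarith [abs_nonneg (x 0 - y 0)]
  have e1 : dist (x 1) (y 1) ^ 2 ≤ (1/2)^2 := by
    rw [Real.dist_eq]; nlinarith [abs_nonneg (x 1 - y 1)]
  nlinarith

/-- 1D localization : nearby points lie only in columns containing the point itself. -/
lemma loc1 (t : ℝ) : ∃ δ > 0, ∀ s : ℝ, ∀ k : ℤ, |s - t| < δ →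
    (k:ℝ) ≤ s → s ≤ k+1 → ((k:ℝ) ≤ t ∧ t ≤ k+1) := by
  by_cases h : (⌊t⌋ : ℝ) = t
  · refine ⟨1/2, by norm_num, fun s k hd h1 h2 => ?_⟩
    rw [abs_lt] at hd
    have hk1 : (k:ℝ) < ⌊t⌋ + 1 := by linarith
    have hk2 : (⌊t⌋:ℝ) - 1 < k + 1 := by linarith
    have i1 : k ≤ ⌊t⌋ := by exact_mod_cast Int.lt_add_one_iff.mp (by exact_mod_cast hk1)
    have i2 : ⌊t⌋ ≤ k + 1 := by
      have : (⌊t⌋:ℝ) < (k:ℝ) + 2 := by linarith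
      have : ⌊t⌋ < k + 2 := by exact_mod_cast this
      omega
    constructor
    · calc (k:ℝ) ≤ ⌊t⌋ := by exact_mod_cast i1
        _ = t := h
    · calc t = (⌊t⌋:ℝ) := h.symm
        _ ≤ k + 1 := by exact_mod_cast i2
  · have hf1 : (⌊t⌋ : ℝ) < t := lt_of_le_of_ne (Int.floor_le t) h
    have hf2 : t < ⌊t⌋ + 1 := Int.lt_floor_add_one t
    refine ⟨min (t - ⌊t⌋) (⌊t⌋ + 1 - t), lt_min (by linarith) (by linarith), fun s k hd h1 h2 => ?_⟩
    rw [abs_lt] at hd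
    have hk1 : (k:ℝ) < ⌊t⌋ + 1 := by
      have := min_le_right (t - ⌊t⌋) (⌊t⌋ + 1 - t); linarith
    have hk2 : (⌊t⌋:ℝ) < k + 1 := by
      have := min_le_left (t - ⌊t⌋) (⌊t⌋ + 1 - t); linarith
    have i1 : k ≤ ⌊t⌋ := by exact_mod_cast Int.lt_add_one_iff.mp (by exact_mod_cast hk1)
    have i2 : ⌊t⌋ ≤ k := by
      have : (⌊t⌋:ℝ) < (k:ℝ) + 1 := hk2
      have : ⌊t⌋ < k + 1 := by exact_mod_cast this
      omega
    have : k = ⌊t⌋ := le_antisymm i1 (i2)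
    subst this
    exact ⟨le_of_lt hf1, le_of_lt hf2⟩

def box (a b c d : ℝ) : Set (EuclideanSpace ℝ (Fin 2)) :=
  {x | a < x 0 ∧ x 0 < b ∧ c < x 1 ∧ x 1 < d}

lemma isOpen_box (a b c d : ℝ) : IsOpen (box a b c d) := by
  have c0 : Continuous (fun x : EuclideanSpace ℝ (Fin 2) => x 0) :=
    (EuclideanSpace.proj (𝕜 := ℝ) (0 : Fin 2)).continuous
  have c1 : Continuous (fun x : EuclideanSpace ℝ (Fin 2) => x 1) :=
    (EuclideanSpace.proj (𝕜 := ℝ) (1 : Fin 2)).continuous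
  have : box a b c d = ((fun x : EuclideanSpace ℝ (Fin 2) => x 0) ⁻¹' (Set.Ioo a b)) ∩
      ((fun x : EuclideanSpace ℝ (Fin 2) => x 1) ⁻¹' (Set.Ioo c d)) := by
    ext x; simp [box, Set.mem_Ioo]; tauto
  rw [this]
  exact ((isOpen_Ioo).preimage c0).inter ((isOpen_Ioo).preimage c1)

lemma openCube_unique (z z' : ℤ × ℤ) (x : EuclideanSpace ℝ (Fin 2))
    (hx : x ∈ box z.1 (z.1+1) z.2 (z.2+1)) (hx' : x ∈ latCube z') : z' = z := by
  obtain ⟨a1, a2, a3, a4⟩ := hx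
  rw [mem_latCube] at hx'
  obtain ⟨b1, b2, b3, b4⟩ := hx'
  have e1 : (z'.1:ℝ) < z.1 + 1 := lt_of_le_of_lt b1 a2
  have e2 : (z.1:ℝ) < z'.1 + 1 := lt_of_lt_of_le a1 b2
  have e3 : (z'.2:ℝ) < z.2 + 1 := lt_of_le_of_lt b3 a4
  have e4 : (z.2:ℝ) < z'.2 + 1 := lt_of_lt_of_le a3 b4
  have i1 : z'.1 < z.1 + 1 := by exact_mod_cast e1
  have i2 : z.1 < z'.1 + 1 := by exact_mod_cast e2
  have i3 : z'.2 < z.2 + 1 := by exact_mod_cast e3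
  have i4 : z.2 < z'.2 + 1 := by exact_mod_cast e4
  have : z'.1 = z.1 ∧ z'.2 = z.2 := by omega
  exact Prod.ext this.1 this.2

section Measurable
variable {A : Set (EuclideanSpace ℝ (Fin 2))} {Z : Set (ℤ × ℤ)}
variable (hZ : A = ⋃ z ∈ Z, latCube z)
include hZ

lemma memA_iff (x : EuclideanSpace ℝ (Fin 2)) : x ∈ A ↔ ∃ z ∈ Z, x ∈ latCube z := by
  rw [hZ]; simp

lemma isClosed_A : IsClosed A := by
  rw [← closure_subset_iff_isClosed]
  intro x hx
  obtain ⟨δ, hδ, hloc0⟩ := loc1 (x 0)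
  obtain ⟨δ', hδ', hloc1⟩ := loc1 (x 1)
  rw [Metric.mem_closure_iff] at hx
  obtain ⟨y, hyA, hyd⟩ := hx (min δ δ') (lt_min hδ hδ')
  rw [memA_iff hZ] at hyA
  obtain ⟨z, hzZ, hyz⟩ := hyA
  rw [mem_latCube] at hyz
  have d0 : |y 0 - x 0| < δ := by
    have := coord_abs_le_dist x y 0
    rw [abs_sub_comm] at this
    exact lt_of_le_of_lt this (lt_of_lt_of_le hyd (min_le_left _ _))
  have d1 : |y 1 - x 1| < δ' := by
    have := coord_abs_le_dist x y 1
    rw [abs_sub_comm] at this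
    exact lt_of_le_of_lt this (lt_of_lt_of_le hyd (min_le_right _ _))
  rw [memA_iff hZ]
  refine ⟨z, hzZ, ?_⟩
  rw [mem_latCube]
  obtain ⟨u1, u2⟩ := hloc0 (y 0) z.1 d0 hyz.1 hyz.2.1
  obtain ⟨v1, v2⟩ := hloc1 (y 1) z.2 d1 hyz.2.2.1 hyz.2.2.2
  exact ⟨u1, u2, v1, v2⟩

lemma notMemA_of_openCube (z : ℤ × ℤ) (hz : z ∉ Z) (x : EuclideanSpace ℝ (Fin 2))
    (hx : x ∈ box z.1 (z.1+1) z.2 (z.2+1)) : x ∉ A := by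
  rw [memA_iff hZ]
  rintro ⟨z', hz', hxz'⟩
  exact hz (openCube_unique z z' x hx hxz' ▸ hz')

lemma mem_closure_compl (z : ℤ × ℤ) (hz : z ∉ Z) (x : EuclideanSpace ℝ (Fin 2))
    (hx : x ∈ latCube z) : x ∈ closure Aᶜ := by
  rw [Metric.mem_closure_iff]
  intro ε hε
  set t : ℝ := min (ε/2) (1/2) with ht
  have ht0 : 0 < t := lt_min (by linarith) (by norm_num)
  have ht1 : t ≤ 1/2 := min_le_right _ _
  refine ⟨x + t • (dualPt z - x), ?_, ?_⟩
  · rw [Set.mem_compl_iff]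
    apply notMemA_of_openCube hZ z hz
    rw [mem_latCube] at hx
    have e0 : (x + t • (dualPt z - x)) 0 = x 0 + t * (dualPt z 0 - x 0) := by
      simp [PiLp.add_apply, PiLp.smul_apply, PiLp.sub_apply, smul_eq_mul]
    have e1 : (x + t • (dualPt z - x)) 1 = x 1 + t * (dualPt z 1 - x 1) := by
      simp [PiLp.add_apply, PiLp.smul_apply, PiLp.sub_apply, smul_eq_mul]
    refine ⟨?_, ?_, ?_, ?_⟩
    · rw [e0, dualPt0]; nlinarith [hx.1, hx.2.1]
    · rw [e0, dualPt0]; nlinarith [hx.1, hx.2.1]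
    · rw [e1, dualPt1]; nlinarith [hx.2.2.1, hx.2.2.2]
    · rw [e1, dualPt1]; nlinarith [hx.2.2.1, hx.2.2.2]
  · have : dist x (x + t • (dualPt z - x)) = t * dist (dualPt z) x := by
      rw [dist_comm, dist_eq_norm]
      have : x + t • (dualPt z - x) - x = t • (dualPt z - x) := by abel
      rw [this, norm_smul, Real.norm_eq_abs, abs_of_pos ht0, ← dist_eq_norm]
    rw [this]
    rw [mem_latCube] at hx
    have hd : dist (dualPt z) x ≤ 1 := by
      apply dist_le_one_of_coords <;> rw [abs_le] <;>
        [rw [dualPt0]; rw [dualPt1]] <;> constructor <;> push_cast <;> linarith [hx.1, hx.2.1, hx.2.2.1, hx.2.2.2]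
    calc t * dist (dualPt z) x ≤ t * 1 := by nlinarith [dist_nonneg (x := dualPt z) (y := x)]
      _ = t := mul_one t
      _ < ε := by
        have := min_le_left (ε/2) (1/2); rw [← ht] at this; linarith

end Measurable

lemma mem_segH (p : ℤ × ℤ) (x : EuclideanSpace ℝ (Fin 2)) :
    x ∈ segment ℝ (latPt p) (latPt (p.1+1, p.2)) ↔
      (x 1 = p.2 ∧ (p.1:ℝ) ≤ x 0 ∧ x 0 ≤ p.1+1) := by
  rw [segment_eq_image']
  constructor
  · rintro ⟨t, ht, rfl⟩
    simp only [PiLp.add_apply, PiLp.smul_apply, PiLp.sub_apply, smul_eq_mul, latPt0, latPt1]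
    push_cast
    refine ⟨by ring, by nlinarith [ht.1, ht.2], by nlinarith [ht.1, ht.2]⟩
  · rintro ⟨h1, h2, h3⟩
    refine ⟨x 0 - p.1, ⟨by linarith, by push_cast; linarith⟩, ?_⟩
    apply PiLp.ext
    intro i
    fin_cases i <;>
      simp [PiLp.add_apply, PiLp.smul_apply, PiLp.sub_apply, smul_eq_mul, latPt,
        WithLp.equiv_symm_apply, PiLp.toLp_apply] <;> push_cast <;> nlinarith [h1]

lemma mem_segV (p : ℤ × ℤ) (x : EuclideanSpace ℝ (Fin 2)) :
    x ∈ segment ℝ (latPt p) (latPt (p.1, p.2+1)) ↔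
      (x 0 = p.1 ∧ (p.2:ℝ) ≤ x 1 ∧ x 1 ≤ p.2+1) := by
  rw [segment_eq_image']
  constructor
  · rintro ⟨t, ht, rfl⟩
    simp only [PiLp.add_apply, PiLp.smul_apply, PiLp.sub_apply, smul_eq_mul, latPt0, latPt1]
    push_cast
    refine ⟨by ring, by nlinarith [ht.1, ht.2], by nlinarith [ht.1, ht.2]⟩
  · rintro ⟨h1, h2, h3⟩
    refine ⟨x 1 - p.2, ⟨by linarith, by push_cast; linarith⟩, ?_⟩
    apply PiLp.ext
    intro i
    fin_cases i <;>
      simp [PiLp.add_apply, PiLp.smul_apply, PiLp.sub_apply, smul_eq_mul, latPt,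
        WithLp.equiv_symm_apply, PiLp.toLp_apply] <;> push_cast <;> nlinarith [h1]

/-- Horizontal boundary edge predicate: edge from `latPt p` to `latPt (p+e₁)`. -/
def HB (Z : Set (ℤ × ℤ)) (p : ℤ × ℤ) : Prop := ¬(p ∈ Z ↔ (p.1, p.2-1) ∈ Z)
/-- Vertical boundary edge predicate: edge from `latPt p` to `latPt (p+e₂)`. -/
def VB (Z : Set (ℤ × ℤ)) (p : ℤ × ℤ) : Prop := ¬(p ∈ Z ↔ (p.1-1, p.2) ∈ Z)

def Bd (Z : Set (ℤ × ℤ)) : Set (EuclideanSpace ℝ (Fin 2)) :=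
  (⋃ p ∈ {p | HB Z p}, segment ℝ (latPt p) (latPt (p.1+1, p.2))) ∪
  (⋃ p ∈ {p | VB Z p}, segment ℝ (latPt p) (latPt (p.1, p.2+1)))

lemma box_sub_cube (z : ℤ × ℤ) : box z.1 (z.1+1) z.2 (z.2+1) ⊆ latCube z := by
  intro x ⟨h1,h2,h3,h4⟩; rw [mem_latCube]; exact ⟨le_of_lt h1, le_of_lt h2, le_of_lt h3, le_of_lt h4⟩

lemma box2V (k m : ℤ) : box ((k:ℝ)-1) (k+1) m (m+1) ⊆ latCube (k-1,m) ∪ latCube (k,m) := by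
  intro x ⟨h1,h2,h3,h4⟩
  by_cases h : x 0 ≤ k
  · left; rw [mem_latCube]; push_cast; exact ⟨by linarith, by linarith, le_of_lt h3, le_of_lt h4⟩
  · right; rw [mem_latCube]; push_cast
    exact ⟨by linarith, by linarith, le_of_lt h3, le_of_lt h4⟩

lemma box2H (k m : ℤ) : box (k:ℝ) (k+1) (m-1) (m+1) ⊆ latCube (k,m-1) ∪ latCube (k,m) := by
  intro x ⟨h1,h2,h3,h4⟩
  by_cases h : x 1 ≤ m
  · left; rw [mem_latCube]; push_cast; exact ⟨le_of_lt h1, le_of_lt h2, by linarith, by linarith⟩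
  · right; rw [mem_latCube]; push_cast
    exact ⟨le_of_lt h1, le_of_lt h2, by linarith, by linarith⟩

lemma box4 (k l : ℤ) : box ((k:ℝ)-1) (k+1) ((l:ℝ)-1) (l+1) ⊆
    latCube (k-1,l-1) ∪ latCube (k-1,l) ∪ latCube (k,l-1) ∪ latCube (k,l) := by
  intro x ⟨h1,h2,h3,h4⟩
  by_cases h : x 0 ≤ k <;> by_cases h' : x 1 ≤ l
  · left; left; left; rw [mem_latCube]; push_cast
    exact ⟨by linarith, by linarith, by linarith, by linarith⟩
  · left; left; right; rw [mem_latCube]; push_cast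
    exact ⟨by linarith, by linarith, by linarith, by linarith⟩
  · left; right; rw [mem_latCube]; push_cast
    exact ⟨by linarith, by linarith, by linarith, by linarith⟩
  · right; rw [mem_latCube]; push_cast
    exact ⟨by linarith, by linarith, by linarith, by linarith⟩

section Frontier
variable {A : Set (EuclideanSpace ℝ (Fin 2))} {Z : Set (ℤ × ℤ)}
variable (hZ : A = ⋃ z ∈ Z, latCube z)
include hZ

lemma cube_sub_A {z : ℤ × ℤ} (hz : z ∈ Z) : latCube z ⊆ A := by
  intro x hx; rw [memA_iff hZ]; exact ⟨z, hz, hx⟩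

lemma Bd_sub_frontier : Bd Z ⊆ frontier A := by
  have hcl : IsClosed A := isClosed_A hZ
  have hfr : frontier A = A ∩ closure Aᶜ := by
    rw [frontier, hcl.closure_eq, Set.diff_eq, closure_compl]
  intro x hx
  rw [hfr]
  rcases hx with hx | hx
  · simp only [Set.mem_iUnion, Set.mem_setOf_eq] at hx
    obtain ⟨p, hp, hseg⟩ := hx
    rw [mem_segH] at hseg
    obtain ⟨e1, e2, e3⟩ := hseg
    have hup : x ∈ latCube p := by
      rw [mem_latCube]; exact ⟨e2, e3, by rw [e1], by rw [e1]; linarith⟩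
    have hdn : x ∈ latCube (p.1, p.2-1) := by
      rw [mem_latCube]; push_cast; exact ⟨e2, e3, by rw [e1]; linarith, by rw [e1]; linarith⟩
    rw [HB] at hp
    by_cases hin : p ∈ Z
    · have hout : (p.1, p.2-1) ∉ Z := fun h => hp ⟨fun _ => h, fun _ => hin⟩
      exact ⟨cube_sub_A hZ hin hup, mem_closure_compl hZ _ hout x hdn⟩
    · have hout : (p.1, p.2-1) ∈ Z := by
        by_contra h; exact hp ⟨fun h' => absurd h' hin, fun h' => absurd h' h⟩
      exact ⟨cube_sub_A hZ hout hdn, mem_closure_compl hZ _ hin x hup⟩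
  · simp only [Set.mem_iUnion, Set.mem_setOf_eq] at hx
    obtain ⟨p, hp, hseg⟩ := hx
    rw [mem_segV] at hseg
    obtain ⟨e1, e2, e3⟩ := hseg
    have hR : x ∈ latCube p := by
      rw [mem_latCube]; exact ⟨by rw [e1], by rw [e1]; linarith, e2, e3⟩
    have hL : x ∈ latCube (p.1-1, p.2) := by
      rw [mem_latCube]; push_cast; exact ⟨by rw [e1]; linarith, by rw [e1]; linarith, e2, e3⟩
    rw [VB] at hp
    by_cases hin : p ∈ Z
    · have hout : (p.1-1, p.2) ∉ Z := fun h => hp ⟨fun _ => h, fun _ => hin⟩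
      exact ⟨cube_sub_A hZ hin hR, mem_closure_compl hZ _ hout x hL⟩
    · have hout : (p.1-1, p.2) ∈ Z := by
        by_contra h; exact hp ⟨fun h' => absurd h' hin, fun h' => absurd h' h⟩
      exact ⟨cube_sub_A hZ hout hL, mem_closure_compl hZ _ hin x hR⟩

end Frontier


lemma int_sandwich {t : ℝ} {a k : ℤ} (h1 : (a:ℝ) ≤ t) (h2 : t ≤ a+1) (hk : t = k) :
    a = k - 1 ∨ a = k := by
  rw [hk] at h1 h2
  have i1 : a ≤ k := by exact_mod_cast h1
  have i2 : k ≤ a + 1 := by exact_mod_cast h2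
  omega

lemma strict_lo {t : ℝ} {a : ℤ} (h : (a:ℝ) ≤ t) (hni : ¬∃ k:ℤ, t = (k:ℝ)) : (a:ℝ) < t :=
  lt_of_le_of_ne h (fun he => hni ⟨a, he.symm⟩)

lemma strict_hi {t : ℝ} {a : ℤ} (h : t ≤ (a:ℝ)+1) (hni : ¬∃ k:ℤ, t = (k:ℝ)) : t < a+1 :=
  lt_of_le_of_ne h (fun he => hni ⟨a+1, by push_cast; exact he⟩)

section Frontier2
variable {A : Set (EuclideanSpace ℝ (Fin 2))} {Z : Set (ℤ × ℤ)}
variable (hZ : A = ⋃ z ∈ Z, latCube z)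
include hZ

lemma mem_interior_of_box {x : EuclideanSpace ℝ (Fin 2)} {a b c d : ℝ}
    (hx : x ∈ box a b c d) (hsub : box a b c d ⊆ A) : x ∈ interior A :=
  interior_maximal hsub (isOpen_box a b c d) hx

lemma frontier_sub_Bd : frontier A ⊆ Bd Z := by
  intro x hx
  have hxA : x ∈ A := by
    have h1 : x ∈ closure A := hx.1
    rwa [(isClosed_A hZ).closure_eq] at h1
  have hxI : x ∉ interior A := hx.2
  rw [memA_iff hZ] at hxA
  obtain ⟨z, hzZ, hxz⟩ := hxA
  rw [mem_latCube] at hxz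
  obtain ⟨c1, c2, c3, c4⟩ := hxz
  by_cases hI0 : ∃ k : ℤ, x 0 = (k:ℝ) <;> by_cases hI1 : ∃ l : ℤ, x 1 = (l:ℝ)
  · -- corner point
    obtain ⟨k, hk⟩ := hI0; obtain ⟨l, hl⟩ := hI1
    have hz1 := int_sandwich c1 c2 hk
    have hz2 := int_sandwich c3 c4 hl
    have hzmem : (k,l) ∈ Z ∨ (k-1,l) ∈ Z ∨ (k-1,l-1) ∈ Z ∨ (k,l-1) ∈ Z := by
      rcases hz1 with h1 | h1 <;> rcases hz2 with h2 | h2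
      · right; right; left
        have e : (k-1, l-1) = z := Prod.ext h1.symm h2.symm
        rw [e]; exact hzZ
      · right; left
        have e : (k-1, l) = z := Prod.ext h1.symm h2.symm
        rw [e]; exact hzZ
      · right; right; right
        have e : (k, l-1) = z := Prod.ext h1.symm h2.symm
        rw [e]; exact hzZ
      · left
        have e : (k, l) = z := Prod.ext h1.symm h2.symm
        rw [e]; exact hzZ
    by_cases hall : (k,l) ∈ Z ∧ (k-1,l) ∈ Z ∧ (k-1,l-1) ∈ Z ∧ (k,l-1) ∈ Z
    · exfalso
      apply hxI
      refine mem_interior_of_box hZ (a := (k:ℝ)-1) (b := (k:ℝ)+1) (c := (l:ℝ)-1) (d := (l:ℝ)+1)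
        ⟨by rw [hk]; linarith, by rw [hk]; linarith, by rw [hl]; linarith, by rw [hl]; linarith⟩ ?_
      refine (box4 k l).trans ?_
      intro y hy
      rw [memA_iff hZ]
      rcases hy with ((h|h)|h)|h
      exacts [⟨_, hall.2.2.1, h⟩, ⟨_, hall.2.1, h⟩, ⟨_, hall.2.2.2, h⟩, ⟨_, hall.1, h⟩]
    · have hVkl : VB Z (k,l) → x ∈ Bd Z := by
        intro hvb
        exact Or.inr (Set.mem_biUnion hvb (by rw [mem_segV]; exact ⟨hk, by rw [hl], by rw [hl]; linarith⟩))
      have hVkl1 : VB Z (k,l-1) → x ∈ Bd Z := by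
        intro hvb
        refine Or.inr (Set.mem_biUnion hvb ?_)
        rw [mem_segV]
        refine ⟨hk, by push_cast; rw [hl]; linarith, by push_cast; rw [hl]; linarith⟩
      have hHkl : HB Z (k,l) → x ∈ Bd Z := by
        intro hhb
        exact Or.inl (Set.mem_biUnion hhb (by rw [mem_segH]; exact ⟨hl, by rw [hk], by rw [hk]; linarith⟩))
      have hHk1l : HB Z (k-1,l) → x ∈ Bd Z := by
        intro hhb
        refine Or.inl (Set.mem_biUnion hhb ?_)
        rw [mem_segH]
        refine ⟨hl, by push_cast; rw [hk]; linarith, by push_cast; rw [hk]; linarith⟩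
      simp only [VB, HB] at hVkl hVkl1 hHkl hHk1l
      by_cases hA' : (k,l) ∈ Z
      · by_cases hB' : (k-1,l) ∈ Z
        · by_cases hD' : (k,l-1) ∈ Z
          · have hC' : (k-1,l-1) ∉ Z := fun hC' => hall ⟨hA', hB', hC', hD'⟩
            exact hHk1l (by intro hiff; exact hC' (hiff.mp hB'))
          · exact hHkl (by intro hiff; exact hD' (hiff.mp hA'))
        · exact hVkl (by intro hiff; exact hB' (hiff.mp hA'))
      · by_cases hB' : (k-1,l) ∈ Z
        · exact hVkl (by intro hiff; exact hA' (hiff.mpr hB'))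
        · by_cases hD' : (k,l-1) ∈ Z
          · exact hHkl (by intro hiff; exact hA' (hiff.mpr hD'))
          · have hC' : (k-1,l-1) ∈ Z := by tauto
            exact hHk1l (by intro hiff; exact hB' (hiff.mpr hC'))
  · -- x 0 integral, x 1 not : on a vertical edge
    obtain ⟨k, hk⟩ := hI0
    have hz1 := int_sandwich c1 c2 hk
    have hs1 : (z.2:ℝ) < x 1 := strict_lo c3 hI1
    have hs2 : x 1 < z.2 + 1 := strict_hi c4 hI1
    by_cases hboth : (k, z.2) ∈ Z ∧ (k-1, z.2) ∈ Z
    · exfalso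
      apply hxI
      refine mem_interior_of_box hZ (a := (k:ℝ)-1) (b := (k:ℝ)+1) (c := (z.2:ℝ)) (d := (z.2:ℝ)+1)
        ⟨by rw [hk]; linarith, by rw [hk]; linarith, hs1, hs2⟩ ?_
      refine (box2V k z.2).trans ?_
      intro y hy
      rw [memA_iff hZ]
      rcases hy with h|h
      exacts [⟨_, hboth.2, h⟩, ⟨_, hboth.1, h⟩]
    · have hone : (k, z.2) ∈ Z ∨ (k-1, z.2) ∈ Z := by
        rcases hz1 with h1 | h1
        · right; have e : (k-1, z.2) = z := Prod.ext h1.symm rfl; rw [e]; exact hzZ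
        · left; have e : (k, z.2) = z := Prod.ext h1.symm rfl; rw [e]; exact hzZ
      have hvb : VB Z (k, z.2) := by
        simp only [VB]; intro hiff
        rcases hone with h|h
        · exact hboth ⟨h, hiff.mp h⟩
        · exact hboth ⟨hiff.mpr h, h⟩
      exact Or.inr (Set.mem_biUnion hvb (by rw [mem_segV]; exact ⟨hk, le_of_lt hs1, le_of_lt hs2⟩))
  · -- x 1 integral, x 0 not : on a horizontal edge
    obtain ⟨l, hl⟩ := hI1
    have hz2 := int_sandwich c3 c4 hl
    have hs1 : (z.1:ℝ) < x 0 := strict_lo c1 hI0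
    have hs2 : x 0 < z.1 + 1 := strict_hi c2 hI0
    by_cases hboth : (z.1, l) ∈ Z ∧ (z.1, l-1) ∈ Z
    · exfalso
      apply hxI
      refine mem_interior_of_box hZ (a := (z.1:ℝ)) (b := (z.1:ℝ)+1) (c := (l:ℝ)-1) (d := (l:ℝ)+1)
        ⟨hs1, hs2, by rw [hl]; linarith, by rw [hl]; linarith⟩ ?_
      refine (box2H z.1 l).trans ?_
      intro y hy
      rw [memA_iff hZ]
      rcases hy with h|h
      exacts [⟨_, hboth.2, h⟩, ⟨_, hboth.1, h⟩]
    · have hone : (z.1, l) ∈ Z ∨ (z.1, l-1) ∈ Z := by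
        rcases hz2 with h2 | h2
        · right; have e : (z.1, l-1) = z := Prod.ext rfl h2.symm; rw [e]; exact hzZ
        · left; have e : (z.1, l) = z := Prod.ext rfl h2.symm; rw [e]; exact hzZ
      have hhb : HB Z (z.1, l) := by
        simp only [HB]; intro hiff
        rcases hone with h|h
        · exact hboth ⟨h, hiff.mp h⟩
        · exact hboth ⟨hiff.mpr h, h⟩
      exact Or.inl (Set.mem_biUnion hhb (by rw [mem_segH]; exact ⟨hl, le_of_lt hs1, le_of_lt hs2⟩))
  · -- neither coordinate integral : interior point
    exfalso
    apply hxI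
    refine mem_interior_of_box hZ (a := (z.1:ℝ)) (b := (z.1:ℝ)+1) (c := (z.2:ℝ)) (d := (z.2:ℝ)+1)
      ⟨strict_lo c1 hI0, strict_hi c2 hI0, strict_lo c3 hI1, strict_hi c4 hI1⟩ ?_
    exact (box_sub_cube z).trans (cube_sub_A hZ hzZ)

lemma frontier_eq_Bd : frontier A = Bd Z :=
  le_antisymm (frontier_sub_Bd hZ) (Bd_sub_frontier hZ)

end Frontier2


namespace Comb
variable (M : ℤ → ℤ → Bool)

/-- Successor along the boundary, with the occupied side on the left. -/
def nx (v : ℤ × ℤ) : ℤ × ℤ :=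
  if M v.1 v.2 = true ∧ M v.1 (v.2-1) = false then (v.1+1, v.2)
  else if M (v.1-1) v.2 = true ∧ M v.1 v.2 = false then (v.1, v.2+1)
  else if M (v.1-1) (v.2-1) = true ∧ M (v.1-1) v.2 = false then (v.1-1, v.2)
  else if M v.1 (v.2-1) = true ∧ M (v.1-1) (v.2-1) = false then (v.1, v.2-1)
  else v

/-- Predecessor along the boundary. -/
def pv (v : ℤ × ℤ) : ℤ × ℤ :=
  if M v.1 (v.2-1) = true ∧ M v.1 v.2 = false then (v.1+1, v.2)
  else if M v.1 v.2 = true ∧ M (v.1-1) v.2 = false then (v.1, v.2+1)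
  else if M (v.1-1) v.2 = true ∧ M (v.1-1) (v.2-1) = false then (v.1-1, v.2)
  else if M (v.1-1) (v.2-1) = true ∧ M v.1 (v.2-1) = false then (v.1, v.2-1)
  else v

/-- No "checkerboard" corner configurations. -/
def NoAlt : Prop := ∀ x y : ℤ,
  ¬(M x y = true ∧ M (x-1) y = false ∧ M (x-1) (y-1) = true ∧ M x (y-1) = false) ∧
  ¬(M x y = false ∧ M (x-1) y = true ∧ M (x-1) (y-1) = false ∧ M x (y-1) = true)

/-- Boundary vertices: the four incident cubes are not all alike. -/
def Bdry (v : ℤ × ℤ) : Prop :=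
  ¬(M v.1 v.2 = M (v.1-1) v.2 ∧ M (v.1-1) v.2 = M (v.1-1) (v.2-1) ∧
    M (v.1-1) (v.2-1) = M v.1 (v.2-1))

variable {M}

lemma pv_nx (hNA : NoAlt M) (v : ℤ × ℤ) : pv M (nx M v) = v := by
  obtain ⟨x, y⟩ := v
  have h2 := hNA (x+1) y
  have h3 := hNA x (y+1)
  cases h1 : M x y <;> cases hb : M (x-1) y <;> cases hc : M (x-1) (y-1) <;>
    cases hd : M x (y-1) <;>
    simp only [nx, pv, h1, hb, hc, hd, add_sub_cancel_right, sub_add_cancel, and_true, and_false,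
      true_and, false_and, if_true, if_false, and_self, Bool.true_eq_false, Bool.false_eq_true,
      not_false_eq_true, if_neg, if_pos, ite_true, ite_false] <;>
    simp_all only [add_sub_cancel_right, sub_add_cancel, not_and, Bool.not_eq_false,
      Bool.not_eq_true] <;>
    first
    | rfl
    | ((cases hn1 : M (x+1) y <;> cases hn2 : M (x+1) (y-1) <;>
        simp_all [add_sub_cancel_right, sub_add_cancel]); done)
    | ((cases hn1 : M x (y+1) <;> cases hn2 : M (x-1) (y+1) <;>
        simp_all [add_sub_cancel_right, sub_add_cancel]); done)

set_option maxHeartbeats 1600000 in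
lemma nx_pv (hNA : NoAlt M) (v : ℤ × ℤ) : nx M (pv M v) = v := by
  obtain ⟨x, y⟩ := v
  cases h1 : M x y <;> cases hb : M (x-1) y <;> cases hc : M (x-1) (y-1) <;>
    cases hd : M x (y-1) <;>
    simp only [pv, nx, h1, hb, hc, hd, add_sub_cancel_right, sub_add_cancel, and_true, and_false,
      true_and, false_and, if_true, if_false, and_self, Bool.true_eq_false, Bool.false_eq_true,
      not_false_eq_true, if_neg, if_pos, ite_true, ite_false] <;>
    first
    | rfl
    | ((cases hn1 : M (x+1) y <;> cases hn2 : M (x+1) (y-1) <;>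
        first
        | (exfalso; apply (hNA (x+1) y).1; simp_all [add_sub_cancel_right, sub_add_cancel]; done)
        | (exfalso; apply (hNA (x+1) y).2; simp_all [add_sub_cancel_right, sub_add_cancel]; done)
        | (simp_all [add_sub_cancel_right, sub_add_cancel]; done)); done)
    | ((cases hn1 : M x (y+1) <;> cases hn2 : M (x-1) (y+1) <;>
        first
        | (exfalso; apply (hNA x (y+1)).1; simp_all [add_sub_cancel_right, sub_add_cancel]; done)
        | (exfalso; apply (hNA x (y+1)).2; simp_all [add_sub_cancel_right, sub_add_cancel]; done)
        | (simp_all [add_sub_cancel_right, sub_add_cancel]; done)); done)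


lemma bdry_nx (hNA : NoAlt M) {v : ℤ × ℤ} (hv : Bdry M v) : Bdry M (nx M v) := by
  obtain ⟨x, y⟩ := v
  simp only [Bdry] at hv ⊢
  cases h1 : M x y <;> cases hb : M (x-1) y <;> cases hc : M (x-1) (y-1) <;>
    cases hd : M x (y-1) <;>
    simp_all only [nx, h1, hb, hc, hd, and_true, and_false, true_and, false_and,
      if_true, if_false, and_self, Bool.true_eq_false, Bool.false_eq_true,
      not_false_eq_true, if_neg, if_pos, ite_true, ite_false] <;>
    simp_all [add_sub_cancel_right, sub_add_cancel]

lemma bdry_pv (hNA : NoAlt M) {v : ℤ × ℤ} (hv : Bdry M v) : Bdry M (pv M v) := by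
  obtain ⟨x, y⟩ := v
  simp only [Bdry] at hv ⊢
  cases h1 : M x y <;> cases hb : M (x-1) y <;> cases hc : M (x-1) (y-1) <;>
    cases hd : M x (y-1) <;>
    simp_all only [pv, h1, hb, hc, hd, and_true, and_false, true_and, false_and,
      if_true, if_false, and_self, Bool.true_eq_false, Bool.false_eq_true,
      not_false_eq_true, if_neg, if_pos, ite_true, ite_false] <;>
    simp_all [add_sub_cancel_right, sub_add_cancel]

lemma step_nx {v : ℤ × ℤ} (hv : Bdry M v) :
    |(nx M v).1 - v.1| + |(nx M v).2 - v.2| = 1 := by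
  obtain ⟨x, y⟩ := v
  simp only [Bdry] at hv
  cases h1 : M x y <;> cases hb : M (x-1) y <;> cases hc : M (x-1) (y-1) <;>
    cases hd : M x (y-1) <;>
    simp_all only [nx, and_true, and_false, true_and, false_and,
      if_true, if_false, and_self, Bool.true_eq_false, Bool.false_eq_true,
      not_false_eq_true, if_neg, if_pos, ite_true, ite_false] <;>
    simp_all <;> omega

lemma nx_ne {v : ℤ × ℤ} (hv : Bdry M v) : nx M v ≠ v := by
  obtain ⟨x, y⟩ := v
  simp only [Bdry] at hv
  cases h1 : M x y <;> cases hb : M (x-1) y <;> cases hc : M (x-1) (y-1) <;>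
    cases hd : M x (y-1) <;>
    simp_all only [nx, and_true, and_false, true_and, false_and,
      if_true, if_false, and_self, Bool.true_eq_false, Bool.false_eq_true,
      not_false_eq_true, if_neg, if_pos, ite_true, ite_false] <;>
    simp_all [Prod.ext_iff] <;> omega

lemma bdry_of_hb {x y : ℤ} (h : M x y ≠ M x (y-1)) : Bdry M (x,y) := by
  simp only [Bdry]; intro ⟨e1,e2,e3⟩; exact h (e1.trans (e2.trans e3))

lemma bdry_of_hb' {x y : ℤ} (h : M x y ≠ M x (y-1)) : Bdry M (x+1,y) := by
  simp only [Bdry, add_sub_cancel_right]; intro ⟨e1,e2,e3⟩; exact h e2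

lemma bdry_of_vb {x y : ℤ} (h : M x y ≠ M (x-1) y) : Bdry M (x,y) := by
  simp only [Bdry]; intro ⟨e1,e2,e3⟩; exact h e1

lemma bdry_of_vb' {x y : ℤ} (h : M x y ≠ M (x-1) y) : Bdry M (x,y+1) := by
  simp only [Bdry, add_sub_cancel_right]; intro ⟨e1,e2,e3⟩; exact h e3.symm

lemma hb_cover (hNA : NoAlt M) {x y : ℤ} (h : M x y ≠ M x (y-1)) :
    nx M (x,y) = (x+1,y) ∨ nx M (x+1,y) = (x,y) := by
  cases h1 : M x y <;> cases hd : M x (y-1)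
  · simp_all
  · -- oriented westward: at (x+1,y)
    right
    cases hn1 : M (x+1) y <;> cases hn2 : M (x+1) (y-1) <;>
      first
      | (exfalso; apply (hNA (x+1) y).1; simp_all [add_sub_cancel_right]; done)
      | (exfalso; apply (hNA (x+1) y).2; simp_all [add_sub_cancel_right]; done)
      | (simp_all [nx, add_sub_cancel_right]; done)
  · left; simp [nx, h1, hd]
  · simp_all

lemma vb_cover (hNA : NoAlt M) {x y : ℤ} (h : M x y ≠ M (x-1) y) :
    nx M (x,y) = (x,y+1) ∨ nx M (x,y+1) = (x,y) := by
  cases h1 : M x y <;> cases hb : M (x-1) y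
  · simp_all
  · left; simp [nx, h1, hb]
  · -- oriented southward: at (x,y+1)
    right
    cases hn1 : M x (y+1) <;> cases hn2 : M (x-1) (y+1) <;>
      first
      | (exfalso; apply (hNA x (y+1)).1; simp_all [add_sub_cancel_right]; done)
      | (exfalso; apply (hNA x (y+1)).2; simp_all [add_sub_cancel_right]; done)
      | (simp_all [nx, add_sub_cancel_right]; done)
  · simp_all

lemma nx_edge {v : ℤ × ℤ} (hv : Bdry M v) :
    (nx M v = (v.1+1, v.2) ∧ M v.1 v.2 ≠ M v.1 (v.2-1)) ∨
    (nx M v = (v.1, v.2+1) ∧ M v.1 v.2 ≠ M (v.1-1) v.2) ∨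
    (nx M v = (v.1-1, v.2) ∧ M (v.1-1) v.2 ≠ M (v.1-1) (v.2-1)) ∨
    (nx M v = (v.1, v.2-1) ∧ M v.1 (v.2-1) ≠ M (v.1-1) (v.2-1)) := by
  obtain ⟨x, y⟩ := v
  simp only [Bdry] at hv
  cases h1 : M x y <;> cases hb : M (x-1) y <;> cases hc : M (x-1) (y-1) <;>
    cases hd : M x (y-1) <;>
    simp_all only [nx, and_true, and_false, true_and, false_and,
      if_true, if_false, and_self, Bool.true_eq_false, Bool.false_eq_true,
      not_false_eq_true, if_neg, if_pos, ite_true, ite_false] <;>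
    simp_all

def ePerm (hNA : NoAlt M) : Equiv.Perm (ℤ × ℤ) :=
  ⟨nx M, pv M, pv_nx hNA, nx_pv hNA⟩

lemma ePerm_apply (hNA : NoAlt M) (v : ℤ × ℤ) : ePerm hNA v = nx M v := rfl
lemma ePerm_symm_apply (hNA : NoAlt M) (v : ℤ × ℤ) : (ePerm hNA)⁻¹ v = pv M v := rfl

lemma zpow_apply_add (g : Equiv.Perm (ℤ × ℤ)) (i j : ℤ) (v : ℤ × ℤ) :
    (g^(i+j)) v = (g^i) ((g^j) v) := by
  rw [zpow_add, Equiv.Perm.mul_apply]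

lemma bdry_zpow (hNA : NoAlt M) {v : ℤ × ℤ} (hv : Bdry M v) (i : ℤ) :
    Bdry M ((ePerm hNA ^ i) v) := by
  induction i using Int.induction_on with
  | zero => simpa using hv
  | succ k ih =>
    have : ((ePerm hNA) ^ ((k:ℤ)+1)) v = ePerm hNA ((ePerm hNA ^ (k:ℤ)) v) := by
      rw [add_comm, zpow_apply_add, zpow_one]
    rw [this, ePerm_apply]
    exact bdry_nx hNA ih
  | pred k ih =>
    have : ((ePerm hNA) ^ (-(k:ℤ)-1)) v = (ePerm hNA)⁻¹ ((ePerm hNA ^ (-(k:ℤ))) v) := by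
      rw [sub_eq_add_neg, add_comm, zpow_apply_add, zpow_neg_one]
    rw [this, ePerm_symm_apply]
    exact bdry_pv hNA ih

lemma collision_period (g : Equiv.Perm (ℤ × ℤ)) (v : ℤ × ℤ) {i j : ℤ} (h : (g^i) v = (g^j) v) :
    (g^(j-i)) v = v := by
  have h2 := congrArg (⇑(g^(-i))) h
  rw [← zpow_apply_add, ← zpow_apply_add, neg_add_cancel, zpow_zero] at h2
  have : (g^(-i+j)) v = v := by rw [← h2]; rfl
  rwa [show -i + j = j - i by ring] at this

/-- The orbit of a vertex under the boundary permutation. -/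
def orb (g : Equiv.Perm (ℤ × ℤ)) (v : ℤ × ℤ) : Set (ℤ × ℤ) := Set.range (fun i : ℤ => (g^i) v)

lemma mem_orb_self (g : Equiv.Perm (ℤ × ℤ)) (v : ℤ × ℤ) : v ∈ orb g v :=
  ⟨0, by simp⟩

lemma orb_eq_of_mem {g : Equiv.Perm (ℤ × ℤ)} {v w : ℤ × ℤ} (h : w ∈ orb g v) :
    orb g w = orb g v := by
  obtain ⟨i, rfl⟩ := h
  ext u
  constructor
  · rintro ⟨j, rfl⟩; exact ⟨j + i, by simp only []; rw [zpow_apply_add]⟩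
  · rintro ⟨j, rfl⟩
    refine ⟨j - i, ?_⟩
    simp only []
    rw [← zpow_apply_add, sub_add_cancel]
end Comb


lemma adj_normalize {u v : ℤ × ℤ} (h : |v.1-u.1|+|v.2-u.2| = 1) :
    ∃ p : ℤ × ℤ,
      (segment ℝ (latPt u) (latPt v) = segment ℝ (latPt p) (latPt (p.1+1,p.2)) ∧
        ((u = p ∧ v = (p.1+1,p.2)) ∨ (v = p ∧ u = (p.1+1,p.2)))) ∨
      (segment ℝ (latPt u) (latPt v) = segment ℝ (latPt p) (latPt (p.1,p.2+1)) ∧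
        ((u = p ∧ v = (p.1,p.2+1)) ∨ (v = p ∧ u = (p.1,p.2+1)))) := by
  have hc : v = (u.1+1, u.2) ∨ v = (u.1-1, u.2) ∨ v = (u.1, u.2+1) ∨ v = (u.1, u.2-1) := by
    rcases abs_cases (v.1-u.1) with ⟨e1,f1⟩ | ⟨e1,f1⟩ <;>
      rcases abs_cases (v.2-u.2) with ⟨e2,f2⟩ | ⟨e2,f2⟩ <;>
      simp [Prod.ext_iff] <;> omega
  rcases hc with rfl | rfl | rfl | rfl
  · exact ⟨u, Or.inl ⟨rfl, Or.inl ⟨rfl, rfl⟩⟩⟩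
  · refine ⟨(u.1-1, u.2), Or.inl ⟨?_, Or.inr ⟨rfl, Prod.ext (by omega) rfl⟩⟩⟩
    rw [segment_symm, show (((u.1-1,u.2).1+1 : ℤ), (u.1-1,u.2).2) = u from
      Prod.ext (by show u.1-1+1 = u.1; omega) rfl]
  · exact ⟨u, Or.inr ⟨rfl, Or.inl ⟨rfl, rfl⟩⟩⟩
  · refine ⟨(u.1, u.2-1), Or.inr ⟨?_, Or.inr ⟨rfl, Prod.ext rfl (by omega)⟩⟩⟩
    rw [segment_symm, show ((u.1,u.2-1).1, ((u.1,u.2-1).2+1 : ℤ)) = u from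
      Prod.ext rfl (by show u.2-1+1 = u.2; omega)]

lemma seg_meet {u v u' v' : ℤ × ℤ}
    (h : |v.1-u.1|+|v.2-u.2| = 1) (h' : |v'.1-u'.1|+|v'.2-u'.2| = 1)
    {x : EuclideanSpace ℝ (Fin 2)}
    (hx : x ∈ segment ℝ (latPt u) (latPt v)) (hx' : x ∈ segment ℝ (latPt u') (latPt v')) :
    u = u' ∨ u = v' ∨ v = u' ∨ v = v' := by
  obtain ⟨p, hp⟩ := adj_normalize h
  obtain ⟨q, hq⟩ := adj_normalize h'
  rcases hp with ⟨e, hins⟩ | ⟨e, hins⟩ <;> rcases hq with ⟨e', hins'⟩ | ⟨e', hins'⟩ <;>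
    rw [e] at hx <;> rw [e'] at hx'
  · rw [mem_segH] at hx hx'
    have i1 : p.2 = q.2 := by
      have : (p.2:ℝ) = q.2 := by rw [← hx.1, ← hx'.1]
      exact_mod_cast this
    have i2 : p.1 ≤ q.1 + 1 := by
      have : (p.1:ℝ) ≤ (q.1:ℝ) + 1 := le_trans hx.2.1 hx'.2.2
      exact_mod_cast this
    have i3 : q.1 ≤ p.1 + 1 := by
      have : (q.1:ℝ) ≤ (p.1:ℝ) + 1 := le_trans hx'.2.1 hx.2.2
      exact_mod_cast this
    rcases hins with ⟨rfl, rfl⟩ | ⟨rfl, rfl⟩ <;> rcases hins' with ⟨rfl, rfl⟩ | ⟨rfl, rfl⟩ <;>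
      simp [Prod.ext_iff] <;> omega
  · rw [mem_segH] at hx; rw [mem_segV] at hx'
    have i1 : p.1 ≤ q.1 := by
      have : (p.1:ℝ) ≤ (q.1:ℝ) := hx'.1 ▸ hx.2.1
      exact_mod_cast this
    have i2 : q.1 ≤ p.1 + 1 := by
      have : (q.1:ℝ) ≤ (p.1:ℝ) + 1 := hx'.1 ▸ hx.2.2
      exact_mod_cast this
    have i3 : q.2 ≤ p.2 := by
      have : (q.2:ℝ) ≤ (p.2:ℝ) := hx.1 ▸ hx'.2.1
      exact_mod_cast this
    have i4 : p.2 ≤ q.2 + 1 := by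
      have : (p.2:ℝ) ≤ (q.2:ℝ) + 1 := hx.1 ▸ hx'.2.2
      exact_mod_cast this
    rcases hins with ⟨rfl, rfl⟩ | ⟨rfl, rfl⟩ <;> rcases hins' with ⟨rfl, rfl⟩ | ⟨rfl, rfl⟩ <;>
      simp [Prod.ext_iff] <;> omega
  · rw [mem_segV] at hx; rw [mem_segH] at hx'
    have i1 : q.1 ≤ p.1 := by
      have : (q.1:ℝ) ≤ (p.1:ℝ) := hx.1 ▸ hx'.2.1
      exact_mod_cast this
    have i2 : p.1 ≤ q.1 + 1 := by
      have : (p.1:ℝ) ≤ (q.1:ℝ) + 1 := hx.1 ▸ hx'.2.2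
      exact_mod_cast this
    have i3 : p.2 ≤ q.2 := by
      have : (p.2:ℝ) ≤ (q.2:ℝ) := hx'.1 ▸ hx.2.1
      exact_mod_cast this
    have i4 : q.2 ≤ p.2 + 1 := by
      have : (q.2:ℝ) ≤ (p.2:ℝ) + 1 := hx'.1 ▸ hx.2.2
      exact_mod_cast this
    rcases hins with ⟨rfl, rfl⟩ | ⟨rfl, rfl⟩ <;> rcases hins' with ⟨rfl, rfl⟩ | ⟨rfl, rfl⟩ <;>
      simp [Prod.ext_iff] <;> omega
  · rw [mem_segV] at hx hx'
    have i1 : p.1 = q.1 := by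
      have : (p.1:ℝ) = q.1 := by rw [← hx.1, ← hx'.1]
      exact_mod_cast this
    have i2 : p.2 ≤ q.2 + 1 := by
      have : (p.2:ℝ) ≤ (q.2:ℝ) + 1 := le_trans hx.2.1 hx'.2.2
      exact_mod_cast this
    have i3 : q.2 ≤ p.2 + 1 := by
      have : (q.2:ℝ) ≤ (p.2:ℝ) + 1 := le_trans hx'.2.1 hx.2.2
      exact_mod_cast this
    rcases hins with ⟨rfl, rfl⟩ | ⟨rfl, rfl⟩ <;> rcases hins' with ⟨rfl, rfl⟩ | ⟨rfl, rfl⟩ <;>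
      simp [Prod.ext_iff] <;> omega


lemma latPt_mem_cube {x y a b : ℤ} (h1 : a = x ∨ a = x-1) (h2 : b = y ∨ b = y-1) :
    latPt (x,y) ∈ latCube (a,b) := by
  rw [mem_latCube, latPt0, latPt1]
  rcases h1 with rfl | rfl <;> rcases h2 with rfl | rfl <;> constructor <;> push_cast <;>
    first
    | linarith
    | (constructor <;> push_cast <;> first | linarith | (constructor <;> push_cast <;> linarith))

open Comb in
/-- Membership function of the index set. -/
noncomputable def Mz (Z : Set (ℤ × ℤ)) : ℤ → ℤ → Bool := fun x y =>
  @decide ((x,y) ∈ Z) (Classical.propDecidable _)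

lemma Mz_true {Z : Set (ℤ × ℤ)} {x y : ℤ} : Mz Z x y = true ↔ (x,y) ∈ Z := by
  simp [Mz]
lemma Mz_false {Z : Set (ℤ × ℤ)} {x y : ℤ} : Mz Z x y = false ↔ (x,y) ∉ Z := by
  simp [Mz]

lemma nbr_resolve1 {w : ℤ × ℤ} {x y : ℤ} (h1 : Nbr w (x,y)) (h2 : Nbr w (x-1,y-1)) :
    w = (x-1,y) ∨ w = (x,y-1) := by
  obtain ⟨u, v⟩ := w
  simp only [Nbr, Prod.ext_iff] at h1 h2 ⊢
  rcases abs_cases (u-x) with ⟨e1,f1⟩|⟨e1,f1⟩ <;> rcases abs_cases (v-y) with ⟨e2,f2⟩|⟨e2,f2⟩ <;>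
    rcases abs_cases (u-(x-1)) with ⟨e3,f3⟩|⟨e3,f3⟩ <;>
    rcases abs_cases (v-(y-1)) with ⟨e4,f4⟩|⟨e4,f4⟩ <;>
    simp only [e1,e2,e3,e4] at h1 h2 <;> omega

lemma nbr_resolve2 {w : ℤ × ℤ} {x y : ℤ} (h1 : Nbr w (x-1,y)) (h2 : Nbr w (x,y-1)) :
    w = (x,y) ∨ w = (x-1,y-1) := by
  obtain ⟨u, v⟩ := w
  simp only [Nbr, Prod.ext_iff] at h1 h2 ⊢
  rcases abs_cases (u-x) with ⟨e1,f1⟩|⟨e1,f1⟩ <;> rcases abs_cases (v-y) with ⟨e2,f2⟩|⟨e2,f2⟩ <;>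
    rcases abs_cases (u-(x-1)) with ⟨e3,f3⟩|⟨e3,f3⟩ <;>
    rcases abs_cases (v-(y-1)) with ⟨e4,f4⟩|⟨e4,f4⟩ <;>
    simp only [e1,e2,e3,e4] at h1 h2 <;> omega

section NA
variable {A : Set (EuclideanSpace ℝ (Fin 2))} {Z : Set (ℤ × ℤ)}
variable (hZ : A = ⋃ z ∈ Z, latCube z)
include hZ

lemma corner_mem_frontier_H {x y : ℤ} (h : HB Z (x,y)) : latPt (x,y) ∈ frontier A := by
  apply Bd_sub_frontier hZ
  left
  refine Set.mem_biUnion h ?_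
  rw [mem_segH, latPt0, latPt1]
  exact ⟨rfl, le_refl _, by norm_num⟩

lemma corner_mem_frontier_V {x y : ℤ} (h : VB Z (x,y)) : latPt (x,y) ∈ frontier A := by
  apply Bd_sub_frontier hZ
  right
  refine Set.mem_biUnion h ?_
  rw [mem_segV, latPt0, latPt1]
  exact ⟨rfl, le_refl _, by norm_num⟩

lemma noAlt_of_reg
    (hreg : ∀ z z', IsBdryCube A Z z → IsBdryCube A Z z' → WiredNbr z z' →
      ∃ z'' ∈ Z, Nbr z'' z ∧ Nbr z'' z') : Comb.NoAlt (Mz Z) := by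
  intro x y
  constructor
  · rintro ⟨ha, hb, hc, hd⟩
    rw [Mz_true] at ha hc
    rw [Mz_false] at hb hd
    have hfr : latPt (x,y) ∈ frontier A :=
      corner_mem_frontier_H hZ (by rw [HB]; simp only []; tauto)
    have hb1 : IsBdryCube A Z (x,y) :=
      ⟨ha, ⟨latPt (x,y), latPt_mem_cube (Or.inl rfl) (Or.inl rfl), hfr⟩⟩
    have hb2 : IsBdryCube A Z (x-1,y-1) :=
      ⟨hc, ⟨latPt (x,y), latPt_mem_cube (Or.inr rfl) (Or.inr rfl), hfr⟩⟩
    have hw : WiredNbr (x,y) (x-1,y-1) := by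
      constructor <;> simp only [] <;>
        [rw [show x - (x-1) = 1 by ring]; rw [show y - (y-1) = 1 by ring]] <;> norm_num
    obtain ⟨w, hwZ, hn1, hn2⟩ := hreg _ _ hb1 hb2 hw
    rcases nbr_resolve1 hn1 hn2 with rfl | rfl
    · exact hb hwZ
    · exact hd hwZ
  · rintro ⟨ha, hb, hc, hd⟩
    rw [Mz_true] at hb hd
    rw [Mz_false] at ha hc
    have hfr : latPt (x,y) ∈ frontier A :=
      corner_mem_frontier_V hZ (by rw [VB]; simp only []; tauto)
    have hb1 : IsBdryCube A Z (x-1,y) :=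
      ⟨hb, ⟨latPt (x,y), latPt_mem_cube (Or.inr rfl) (Or.inl rfl), hfr⟩⟩
    have hb2 : IsBdryCube A Z (x,y-1) :=
      ⟨hd, ⟨latPt (x,y), latPt_mem_cube (Or.inl rfl) (Or.inr rfl), hfr⟩⟩
    have hw : WiredNbr (x-1,y) (x,y-1) := by
      constructor <;> simp only [] <;>
        [rw [show x - 1 - x = -1 by ring]; rw [show y - (y-1) = 1 by ring]] <;> norm_num
    obtain ⟨w, hwZ, hn1, hn2⟩ := hreg _ _ hb1 hb2 hw
    rcases nbr_resolve2 hn1 hn2 with rfl | rfl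
    · exact ha hwZ
    · exact hc hwZ

end NA


namespace Comb
open Classical in
/-- Periodicity of the orbit of `v`. -/
def per (g : Equiv.Perm (ℤ × ℤ)) (v : ℤ × ℤ) : Prop := ∃ k : ℕ, 0 < k ∧ (g^(k:ℤ)) v = v

open Classical in
/-- The parameter interval for the boundary path through `v`. -/
noncomputable def Eset (g : Equiv.Perm (ℤ × ℤ)) (v : ℤ × ℤ) : Set ℤ :=
  if h : per g v then Set.Icc 0 (Nat.find h : ℤ) else Set.univ

open Classical in
lemma Eset_per {g : Equiv.Perm (ℤ × ℤ)} {v : ℤ × ℤ} (h : per g v) :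
    Eset g v = Set.Icc 0 (Nat.find h : ℤ) := dif_pos h

open Classical in
lemma Eset_nper {g : Equiv.Perm (ℤ × ℤ)} {v : ℤ × ℤ} (h : ¬ per g v) :
    Eset g v = Set.univ := dif_neg h

variable {M : ℤ → ℤ → Bool}

lemma step_eq (hNA : NoAlt M) (i : ℤ) (v : ℤ × ℤ) :
    ((ePerm hNA)^(i+1)) v = nx M (((ePerm hNA)^i) v) := by
  rw [add_comm, zpow_apply_add, zpow_one, ePerm_apply]

open Classical in
lemma lattice_path (hNA : NoAlt M) {v : ℤ × ℤ} (hv : Bdry M v) :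
    IsLatticePath (Eset (ePerm hNA) v) (fun i => ((ePerm hNA)^i) v) := by
  refine ⟨?_, ?_, ?_⟩
  · refine ⟨0, ?_⟩
    rw [Eset]
    split
    · exact ⟨le_refl 0, by positivity⟩
    · trivial
  · rw [Eset]; split
    · exact Set.ordConnected_Icc
    · exact Set.ordConnected_univ
  · intro i _ _
    simp only []
    rw [step_eq hNA]
    exact step_nx (bdry_zpow hNA hv i)

open Classical in
lemma simple_path (hNA : NoAlt M) (v : ℤ × ℤ) :
    IsSimplePath (Eset (ePerm hNA) v) (fun i => ((ePerm hNA)^i) v) := by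
  intro i hi j hj hij hcol
  set g := ePerm hNA
  have hper : (g^(j-i)) v = v := collision_period g v hcol
  have hkey : per g v := ⟨(j-i).toNat, by omega,
    by rw [Int.toNat_of_nonneg (by omega : (0:ℤ) ≤ j - i)]; exact hper⟩
  rw [Eset_per hkey] at hi hj
  have hmin : Nat.find hkey ≤ (j-i).toNat := Nat.find_min' hkey ⟨by omega,
    by rw [Int.toNat_of_nonneg (by omega : (0:ℤ) ≤ j - i)]; exact hper⟩
  obtain ⟨hi1, hi2⟩ := hi
  obtain ⟨hj1, hj2⟩ := hj
  have hieq : i = 0 ∧ j = (Nat.find hkey : ℤ) := by omega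
  obtain ⟨rfl, rfl⟩ := hieq
  constructor
  · exact ⟨by rw [Eset_per hkey]; exact ⟨le_refl 0, by positivity⟩, fun t ht => by
      rw [Eset_per hkey] at ht; exact ht.1⟩
  · exact ⟨by rw [Eset_per hkey]; exact ⟨by positivity, le_refl _⟩, fun t ht => by
      rw [Eset_per hkey] at ht; exact ht.2⟩

open Classical in
lemma closed_path (hNA : NoAlt M) (v : ℤ × ℤ) (hfin : (Eset (ePerm hNA) v).Finite) :
    IsClosedPath (Eset (ePerm hNA) v) (fun i => ((ePerm hNA)^i) v) := by
  set g := ePerm hNA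
  by_cases h : per g v
  · refine ⟨0, (Nat.find h : ℤ), ?_, ?_, ?_⟩
    · exact ⟨by rw [Eset_per h]; exact ⟨le_refl 0, by positivity⟩, fun t ht => by
        rw [Eset_per h] at ht; exact ht.1⟩
    · exact ⟨by rw [Eset_per h]; exact ⟨by positivity, le_refl _⟩, fun t ht => by
        rw [Eset_per h] at ht; exact ht.2⟩
    · simp only [zpow_zero, Equiv.Perm.coe_one, id_eq]
      exact ((Nat.find_spec h).2).symm
  · exfalso
    rw [Eset_nper h] at hfin
    exact Set.infinite_univ hfin

open Classical in
lemma cover_index (g : Equiv.Perm (ℤ × ℤ)) (v : ℤ × ℤ) (i : ℤ) :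
    ∃ i', i' ∈ Eset g v ∧ i'+1 ∈ Eset g v ∧ (g^i') v = (g^i) v ∧
      (g^(i'+1)) v = (g^(i+1)) v := by
  by_cases h : per g v
  · have hm0 : 0 < Nat.find h := (Nat.find_spec h).1
    have hmpos : (0:ℤ) < (Nat.find h : ℤ) := by exact_mod_cast hm0
    set m : ℤ := (Nat.find h : ℤ) with hm
    have hfix : (g ^ (m * (i / m))) v = v := by
      have h1 : Function.IsFixedPt (⇑(g^m)) v := (Nat.find_spec h).2
      have h2 := h1.perm_zpow (i / m)
      rwa [← zpow_mul] at h2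
    have hlt : i % m < m := Int.emod_lt_of_pos i hmpos
    have hge : 0 ≤ i % m := Int.emod_nonneg i (by omega)
    refine ⟨i % m, ?_, ?_, ?_, ?_⟩
    · rw [Eset_per h]; exact ⟨hge, le_of_lt hlt⟩
    · rw [Eset_per h]; exact ⟨by omega, by omega⟩
    · have he : (g^i) v = (g^(i % m + m * (i/m))) v := by rw [Int.emod_add_mul_ediv i m]
      rw [he, zpow_apply_add g (i % m) (m * (i/m)) v, hfix]
    · have he : (g^(i+1)) v = (g^(i % m + 1 + m * (i/m))) v := by
        rw [show i % m + 1 + m*(i/m) = i % m + m*(i/m) + 1 by ring, Int.emod_add_mul_ediv i m]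
      rw [he, zpow_apply_add g (i % m + 1) (m * (i/m)) v, hfix]
  · exact ⟨i, by rw [Eset_nper h]; trivial, by rw [Eset_nper h]; trivial, rfl, rfl⟩

end Comb


open Comb in
lemma hb_iff {Z : Set (ℤ × ℤ)} {x y : ℤ} : (Mz Z x y ≠ Mz Z x (y-1)) ↔ HB Z (x,y) := by
  rw [HB]
  by_cases h1 : (x,y) ∈ Z <;> by_cases h2 : ((x,y).1, (x,y).2-1) ∈ Z <;>
    simp [Mz, h1, h2]

open Comb in
lemma vb_iff {Z : Set (ℤ × ℤ)} {x y : ℤ} : (Mz Z x y ≠ Mz Z (x-1) y) ↔ VB Z (x,y) := by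
  rw [VB]
  by_cases h1 : (x,y) ∈ Z <;> by_cases h2 : ((x,y).1-1, (x,y).2) ∈ Z <;>
    simp [Mz, h1, h2]

open Comb in
lemma mem_traces {M : ℤ → ℤ → Bool} (hNA : NoAlt M) (φ : (ℤ × ℤ) ≃ ℕ) {w : ℤ × ℤ}
    {x : EuclideanSpace ℝ (Fin 2)} (hw : Bdry M w)
    (hx : x ∈ segment ℝ (latPt w) (latPt (nx M w))) :
    ∃ n : ℕ, (Bdry M (φ.symm n) ∧
        ∀ m : ℕ, φ.symm m ∈ orb (ePerm hNA) (φ.symm n) → n ≤ m) ∧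
      x ∈ pathTrace (Eset (ePerm hNA) (φ.symm n))
        (fun i => ((ePerm hNA)^i) (φ.symm n)) := by
  classical
  set g := ePerm hNA with hgdef
  have hex : ∃ m : ℕ, φ.symm m ∈ orb g w := ⟨φ w, by rw [Equiv.symm_apply_apply]; exact mem_orb_self g w⟩
  set n := Nat.find hex with hn
  have hspec : φ.symm n ∈ orb g w := Nat.find_spec hex
  obtain ⟨i0, hi0'⟩ := hspec
  have hi0 : (g ^ i0) w = φ.symm n := hi0'
  have horb : orb g (φ.symm n) = orb g w := orb_eq_of_mem ⟨i0, hi0'⟩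
  refine ⟨n, ⟨?_, ?_⟩, ?_⟩
  · rw [← hi0]; exact bdry_zpow hNA hw i0
  · intro m hm
    rw [horb] at hm
    exact Nat.find_min' hex hm
  · have hwmem : w ∈ orb g (φ.symm n) := by rw [horb]; exact mem_orb_self g w
    obtain ⟨i, hi'⟩ := hwmem
    have hi : (g ^ i) (φ.symm n) = w := hi'
    have hnxw : (g^(i+1)) (φ.symm n) = nx M w := by rw [hgdef, step_eq hNA, ← hgdef, hi]
    obtain ⟨i', h1, h2, h3, h4⟩ := cover_index g (φ.symm n) i
    refine Set.mem_biUnion (show i' ∈ {t : ℤ | t ∈ Eset g (φ.symm n) ∧ t + 1 ∈ Eset g (φ.symm n)} from ⟨h1, h2⟩) ?_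
    show x ∈ segment ℝ (latPt ((g ^ i') (φ.symm n))) (latPt ((g ^ (i' + 1)) (φ.symm n)))
    rw [h3, h4, hi, hnxw]
    exact hx


open Comb in
/-- The boundary of a regular `ℤ^{2*}`-measurable set is a disjoint union of images of
simple paths in the lattice graph `(ℤ², 𝔼²)`, and every finite boundary path is closed. -/
theorem stmt5 (A : Set (EuclideanSpace ℝ (Fin 2))) (Z : Set (ℤ × ℤ))
    (hA : IsRegularZstar A Z) :
    ∃ (P : Set ℕ) (Ep : ℕ → Set ℤ) (γ : ℕ → ℤ → ℤ × ℤ),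
      (∀ j ∈ P, IsLatticePath (Ep j) (γ j) ∧ IsSimplePath (Ep j) (γ j)) ∧
      (∀ j ∈ P, ∀ j' ∈ P, j ≠ j' →
        Disjoint (pathTrace (Ep j) (γ j)) (pathTrace (Ep j') (γ j'))) ∧
      frontier A = ⋃ j ∈ P, pathTrace (Ep j) (γ j) ∧
      (∀ j ∈ P, (Ep j).Finite → IsClosedPath (Ep j) (γ j)) := by
  classical
  obtain ⟨hZm, _, hreg2⟩ := hA
  have hZ : A = ⋃ z ∈ Z, latCube z := hZm
  have hNA : Comb.NoAlt (Mz Z) := noAlt_of_reg hZ hreg2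
  set M := Mz Z with hMdef
  set g : Equiv.Perm (ℤ × ℤ) := Comb.ePerm hNA with hgdef
  set φ : (ℤ × ℤ) ≃ ℕ := Denumerable.eqv (ℤ × ℤ) with hφdef
  refine ⟨{n : ℕ | Comb.Bdry M (φ.symm n) ∧
      ∀ m : ℕ, φ.symm m ∈ Comb.orb g (φ.symm n) → n ≤ m},
    fun n => Comb.Eset g (φ.symm n),
    fun n i => (g^i) (φ.symm n), ?_, ?_, ?_, ?_⟩
  · intro j hj
    exact ⟨Comb.lattice_path hNA hj.1, Comb.simple_path hNA _⟩
  · -- disjointness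
    intro j hj j' hj' hne
    rw [Set.disjoint_left]
    intro x hxj hxj'
    simp only [pathTrace, Set.mem_iUnion, Set.mem_setOf_eq] at hxj hxj'
    obtain ⟨i, ⟨hiE, hi1E⟩, hseg⟩ := hxj
    obtain ⟨i', ⟨hiE', hi1E'⟩, hseg'⟩ := hxj'
    have h1 : |((g^(i+1)) (φ.symm j)).1 - ((g^i) (φ.symm j)).1| +
        |((g^(i+1)) (φ.symm j)).2 - ((g^i) (φ.symm j)).2| = 1 := by
      rw [hgdef, Comb.step_eq hNA]
      exact Comb.step_nx (Comb.bdry_zpow hNA hj.1 i)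
    have h1' : |((g^(i'+1)) (φ.symm j')).1 - ((g^i') (φ.symm j')).1| +
        |((g^(i'+1)) (φ.symm j')).2 - ((g^i') (φ.symm j')).2| = 1 := by
      rw [hgdef, Comb.step_eq hNA]
      exact Comb.step_nx (Comb.bdry_zpow hNA hj'.1 i')
    have hmem : ∀ (v : ℤ × ℤ) (t : ℤ), (g^t) v ∈ Comb.orb g v := fun v t => ⟨t, rfl⟩
    have hcom : ∃ u, u ∈ Comb.orb g (φ.symm j) ∧ u ∈ Comb.orb g (φ.symm j') := by
      rcases seg_meet h1 h1' hseg hseg' with h | h | h | h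
      · exact ⟨_, hmem _ i, by rw [h]; exact hmem _ i'⟩
      · exact ⟨_, hmem _ i, by rw [h]; exact hmem _ (i'+1)⟩
      · exact ⟨_, hmem _ (i+1), by rw [h]; exact hmem _ i'⟩
      · exact ⟨_, hmem _ (i+1), by rw [h]; exact hmem _ (i'+1)⟩
    obtain ⟨u, hu, hu'⟩ := hcom
    have e1 : Comb.orb g u = Comb.orb g (φ.symm j) := Comb.orb_eq_of_mem hu
    have e2 : Comb.orb g u = Comb.orb g (φ.symm j') := Comb.orb_eq_of_mem hu'
    have m1 : φ.symm j' ∈ Comb.orb g (φ.symm j) := by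
      rw [← e1, e2]; exact Comb.mem_orb_self g _
    have m2 : φ.symm j ∈ Comb.orb g (φ.symm j') := by
      rw [← e2, e1]; exact Comb.mem_orb_self g _
    exact hne (le_antisymm (hj.2 j' m1) (hj'.2 j m2))
  · -- frontier identity
    rw [frontier_eq_Bd hZ]
    ext x
    constructor
    · intro hx
      rcases hx with hx | hx
      · simp only [Set.mem_iUnion, Set.mem_setOf_eq] at hx
        obtain ⟨p, hp, hseg⟩ := hx
        obtain ⟨px, py⟩ := p
        have hhb : M px py ≠ M px (py-1) := hb_iff.mpr hp
        rcases Comb.hb_cover hNA hhb with hc | hc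
        · have hx' : x ∈ segment ℝ (latPt (px,py)) (latPt (Comb.nx M (px,py))) := by
            rw [hc]; exact hseg
          obtain ⟨n, hnP, hnx⟩ := mem_traces hNA φ (Comb.bdry_of_hb hhb) hx'
          exact Set.mem_biUnion (show _ ∧ _ from hnP) hnx
        · have hx' : x ∈ segment ℝ (latPt (px+1,py)) (latPt (Comb.nx M (px+1,py))) := by
            rw [hc, segment_symm]; exact hseg
          obtain ⟨n, hnP, hnx⟩ := mem_traces hNA φ (Comb.bdry_of_hb' hhb) hx'
          exact Set.mem_biUnion (show _ ∧ _ from hnP) hnx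
      · simp only [Set.mem_iUnion, Set.mem_setOf_eq] at hx
        obtain ⟨p, hp, hseg⟩ := hx
        obtain ⟨px, py⟩ := p
        have hvb : M px py ≠ M (px-1) py := vb_iff.mpr hp
        rcases Comb.vb_cover hNA hvb with hc | hc
        · have hx' : x ∈ segment ℝ (latPt (px,py)) (latPt (Comb.nx M (px,py))) := by
            rw [hc]; exact hseg
          obtain ⟨n, hnP, hnx⟩ := mem_traces hNA φ (Comb.bdry_of_vb hvb) hx'
          exact Set.mem_biUnion (show _ ∧ _ from hnP) hnx
        · have hx' : x ∈ segment ℝ (latPt (px,py+1)) (latPt (Comb.nx M (px,py+1))) := by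
            rw [hc, segment_symm]; exact hseg
          obtain ⟨n, hnP, hnx⟩ := mem_traces hNA φ (Comb.bdry_of_vb' hvb) hx'
          exact Set.mem_biUnion (show _ ∧ _ from hnP) hnx
    · intro hx
      simp only [Set.mem_iUnion] at hx
      obtain ⟨j, hjP, hjx⟩ := hx
      simp only [pathTrace, Set.mem_iUnion, Set.mem_setOf_eq] at hjx
      obtain ⟨i, ⟨hiE, hi1E⟩, hseg⟩ := hjx
      set w : ℤ × ℤ := (g^i) (φ.symm j) with hwdef
      have hw : Comb.Bdry M w := Comb.bdry_zpow hNA hjP.1 i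
      have hseg' : x ∈ segment ℝ (latPt w) (latPt (Comb.nx M w)) := by
        rw [hwdef, ← Comb.step_eq hNA]; exact hseg
      rcases Comb.nx_edge hw with ⟨he, hd⟩ | ⟨he, hd⟩ | ⟨he, hd⟩ | ⟨he, hd⟩
      · left
        refine Set.mem_biUnion (show HB Z (w.1, w.2) from hb_iff.mp hd) ?_
        rw [he] at hseg'
        exact hseg'
      · right
        refine Set.mem_biUnion (show VB Z (w.1, w.2) from vb_iff.mp hd) ?_
        rw [he] at hseg'
        exact hseg'
      · left
        refine Set.mem_biUnion (show HB Z (w.1-1, w.2) from hb_iff.mp hd) ?_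
        rw [he, segment_symm] at hseg'
        rw [show (((w.1-1, w.2).1+1 : ℤ), (w.1-1, w.2).2) = w from
          Prod.ext (by show w.1-1+1 = w.1; omega) rfl]
        exact hseg'
      · right
        refine Set.mem_biUnion (show VB Z (w.1, w.2-1) from vb_iff.mp hd) ?_
        rw [he, segment_symm] at hseg'
        rw [show ((w.1, w.2-1).1, ((w.1, w.2-1).2+1 : ℤ)) = w from
          Prod.ext rfl (by show w.2-1+1 = w.2; omega)]
        exact hseg'
  · intro j hj hfin
    exact Comb.closed_path hNA _ hfin


end
end

section
/- Let O ⊂ R^2 be an open set with smooth compact boundary, let d_O be the signed distance to ∂O (positive inside O), smooth on {|d_O| < ν}, and let η : [−ν,ν] → [0,1] be smooth with η(s) = max η for s ≤ −ν/2, η(s) = 0 for s ≥ ν/2, and A := −η'(0)·(−1) = sup|η'| satisfying A > 2‖(κ_{∂O})_−‖_∞, where κ_{∂O} is the mean curvature of ∂O with outward orientation. Define φ(x) = η(d_O(x)) (extended by the constant values outside the tubular neighborhood). Then for every x ∈ ∂O, −(1+φ(x))κ_{∂O}(x) − Dφ(x)·n_{∂O}(x) ≤ 2‖(κ_{∂O})_−‖_∞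 − A < 0; i.e., O is a strict stationary supersolution of the forced curvature equation V = −a κ − ∇a·n + F with a = 1 + φ, for some F > 0. -/
open RealInnerProductSpace

noncomputable section

/-- The Laplacian of `f : ℝ² → ℝ`, as the trace of the second derivative. -/
def lap2 (f : EuclideanSpace ℝ (Fin 2) → ℝ) (x : EuclideanSpace ℝ (Fin 2)) : ℝ :=
  ∑ i : Fin 2,
    fderiv ℝ (fun y => fderiv ℝ f y (EuclideanSpace.single i 1)) x (EuclideanSpace.single i 1)

/-- Node construction: with `a = 1 + φ`, `φ = η ∘ d_O` built from the signed distance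
`d` to the smooth compact boundary `∂O` and a profile `η` with `η'(0) = -A`,
`A > 2‖(κ_{∂O})₋‖_∞`, one has, at every `x ∈ ∂O`
(`κ = -tr D²d`, `n = -∇d` the outward normal),
`-(1 + φ)κ - ⟪∇φ, n⟫ ≤ 2M - A < 0`; i.e. `O` is a strict stationary supersolution of
`V = -aκ - ∇a·n + F` for some `F > 0`. -/
theorem stmt10
    (O : Set (EuclideanSpace ℝ (Fin 2))) (hO : IsOpen O)
    (hOc : IsCompact (frontier O))
    (ν : ℝ) (hν : 0 < ν)
    (d : EuclideanSpace ℝ (Fin 2) → ℝ)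
    (hd_smooth : ContDiffOn ℝ (⊤ : ℕ∞) d {x | |d x| < ν})
    (hd_eik : ∀ x ∈ {x : EuclideanSpace ℝ (Fin 2) | |d x| < ν}, ‖gradient d x‖ = 1)
    (hd_front : frontier O = {x | d x = 0})
    (hd_pos : ∀ x ∈ O, 0 < d x)
    (hd_neg : ∀ x ∈ (closure O)ᶜ, d x < 0)
    (η : ℝ → ℝ) (hη_smooth : ContDiff ℝ (⊤ : ℕ∞) η)
    (ηmax : ℝ) (hη_range : ∀ s, η s ∈ Set.Icc (0 : ℝ) ηmax) (hηmax1 : ηmax ≤ 1)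
    (hη_left : ∀ s ≤ -ν/2, η s = ηmax)
    (hη_right : ∀ s : ℝ, ν/2 ≤ s → η s = 0)
    (A M : ℝ)
    (hA0 : deriv η 0 = -A)
    (hAsup : ∀ s, |deriv η s| ≤ A)
    (hM : ∀ x ∈ frontier O, max (lap2 d x) 0 ≤ M)
    (hAM : 2 * M < A) :
    ∀ x ∈ frontier O,
      -(1 + η (d x)) * (-(lap2 d x)) -
          ⟪gradient (fun y => η (d y)) x, -(gradient d x)⟫ ≤ 2 * M - A ∧
      2 * M - A < 0 := by
  intro x hx
  have hdx : d x = 0 := by rw [hd_front] at hx; exact hx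
  have hmem : x ∈ {x : EuclideanSpace ℝ (Fin 2) | |d x| < ν} := by
    simp [Set.mem_setOf_eq, hdx, hν]
  have hdiff : DifferentiableAt ℝ d x := by
    by_contra h
    have : gradient d x = 0 := by
      rw [gradient, fderiv_zero_of_not_differentiableAt h, map_zero]
    have h1 := hd_eik x hmem
    rw [this, norm_zero] at h1
    norm_num at h1
  -- chain rule for gradient
  have hgrad : gradient (fun y => η (d y)) x = deriv η (d x) • gradient d x := by
    have h1 : HasFDerivAt d (fderiv ℝ d x) x := hdiff.hasFDerivAt
    have h2 : HasDerivAt η (deriv η (d x)) (d x) :=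
      (hη_smooth.differentiable (by simp) (d x)).hasDerivAt
    have h3 := h2.comp_hasFDerivAt x h1
    have heq : gradient (fun y => η (d y)) x
        = (InnerProductSpace.toDual ℝ _).symm (deriv η (d x) • fderiv ℝ d x) := by
      rw [gradient, show (fun y => η (d y)) = η ∘ d from rfl, h3.fderiv]
    rw [heq, map_smul, gradient]
  have hnorm : ‖gradient d x‖ = 1 := hd_eik x hmem
  have hinner : ⟪gradient (fun y => η (d y)) x, -(gradient d x)⟫ = A := by
    rw [hgrad, hdx, hA0, inner_neg_right, real_inner_smul_left,
      real_inner_self_eq_norm_sq, hnorm]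
    ring
  have hM0 : 0 ≤ M := le_trans (le_max_right _ _) (hM x hx)
  have hLM : lap2 d x ≤ M := le_trans (le_max_left _ _) (hM x hx)
  have hη0 : η (d x) ∈ Set.Icc (0:ℝ) ηmax := hη_range _
  have h1η : 1 ≤ 1 + η (d x) := by linarith [hη0.1]
  have h2η : 1 + η (d x) ≤ 2 := by linarith [hη0.2]
  constructor
  · rw [hinner]
    have key : (1 + η (d x)) * lap2 d x ≤ 2 * M := by
      rcases le_or_gt (lap2 d x) 0 with h | h
      · nlinarith
      · nlinarith
    nlinarith
  · linarith

end
end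

section
/- Let a ∈ C¹(T^d), Ω ⊂ R^d a bounded C² open set, d the signed distance to ∂Ω (positive in Ω), and suppose χ_{cl(Ω)} is a strict subsolution of the stationary curvature equation: there is r' > 0 such that d is smooth on {|d| < r'} and −a(x)Δd(x) − Da(x)·Dd(x) < 0 there. If u is an upper-semicontinuous function such that u − d attains a local minimum at a point x₀ ∈ ∂Ω and u is a viscosity supersolution of −a(x) tr((Id − D̂u ⊗ D̂u)D²u) − Da(x)·Du ≥ 0 near x₀, then a contradiction follows; i.e., no viscosity supersolution of the stationary equation can touch the strict subsolution χ_{cl(Ω)} from above at a boundary point of Ω. -/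
open RealInnerProductSpace

noncomputable section

variable {d : ℕ}

/-- The Laplacian of `f : ℝ^d → ℝ`. -/
def lapE (f : EuclideanSpace ℝ (Fin d) → ℝ) (x : EuclideanSpace ℝ (Fin d)) : ℝ :=
  ∑ i : Fin d,
    fderiv ℝ (fun y => fderiv ℝ f y (EuclideanSpace.single i 1)) x (EuclideanSpace.single i 1)

/-- The second derivative quadratic form `D²f(x)[v,v]`. -/
def hessQ (f : EuclideanSpace ℝ (Fin d) → ℝ) (x v : EuclideanSpace ℝ (Fin d)) : ℝ :=
  fderiv ℝ (fun y => fderiv ℝ f y v) x v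

/-- No viscosity supersolution of the stationary level-set curvature equation
`-a tr((Id - D̂u ⊗ D̂u)D²u) - Da·Du ≥ 0` can touch the strict subsolution
`χ_{cl(Ω)}` (encoded by the signed distance `sd` with
`-aΔ(sd) - Da·D(sd) < 0` near `∂Ω`) from above at a boundary point of `Ω`. -/
theorem stmt14 (a : EuclideanSpace ℝ (Fin d) → ℝ) (ha : ContDiff ℝ 1 a)
    (Ω : Set (EuclideanSpace ℝ (Fin d))) (hΩo : IsOpen Ω)
    (hΩb : Bornology.IsBounded Ω)
    (r' : ℝ) (hr' : 0 < r')
    (sd : EuclideanSpace ℝ (Fin d) → ℝ)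
    (hsd_smooth : ContDiffOn ℝ (⊤ : ℕ∞) sd {x | |sd x| < r'})
    (hsd_eik : ∀ x ∈ {x : EuclideanSpace ℝ (Fin d) | |sd x| < r'}, ‖gradient sd x‖ = 1)
    (hsd_front : frontier Ω = {x | sd x = 0})
    (hsd_pos : ∀ x ∈ Ω, 0 < sd x)
    (hstrict : ∀ x ∈ {x : EuclideanSpace ℝ (Fin d) | |sd x| < r'},
      -(a x) * lapE sd x - ⟪gradient a x, gradient sd x⟫ < 0)
    (u : EuclideanSpace ℝ (Fin d) → ℝ) (hu : UpperSemicontinuous u)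
    (x₀ : EuclideanSpace ℝ (Fin d)) (hx₀ : x₀ ∈ frontier Ω)
    (htouch : IsLocalMin (fun x => u x - sd x) x₀)
    (hsup : ∀ φ : EuclideanSpace ℝ (Fin d) → ℝ,
      ContDiffOn ℝ 2 φ (Metric.ball x₀ r') →
      ∀ x ∈ Metric.ball x₀ r', IsLocalMin (fun y => u y - φ y) x →
        gradient φ x ≠ 0 →
        0 ≤ -(a x) * (lapE φ x - hessQ φ x ((‖gradient φ x‖)⁻¹ • gradient φ x)) -
          ⟪gradient a x, gradient φ x⟫) :
    False := by
  classical
  set S : Set (EuclideanSpace ℝ (Fin d)) := {x | |sd x| < r'} with hS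
  -- x₀ ∈ S
  have hsd0 : sd x₀ = 0 := by
    have := hx₀; rw [hsd_front] at this; exact this
  have hx₀S : x₀ ∈ S := by simp [hS, hsd0, hr']
  -- differentiability on S
  have hdiff : ∀ x ∈ S, DifferentiableAt ℝ sd x := by
    intro x hx
    by_contra h
    have h1 := hsd_eik x hx
    rw [gradient_eq_zero_of_not_differentiableAt h] at h1
    simp at h1
  -- S is open
  have hSopen : IsOpen S := by
    rw [isOpen_iff_mem_nhds]
    intro x hx
    have hc : ContinuousAt (fun y => |sd y|) x := ((hdiff x hx).continuousAt).abs
    exact hc.eventually_lt continuousAt_const hx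
  have hsmoothAt : ∀ x ∈ S, ContDiffAt ℝ (⊤ : ℕ∞) sd x := fun x hx =>
    hsd_smooth.contDiffAt (hSopen.mem_nhds hx)
  -- pick ε
  obtain ⟨ε, hε, hball⟩ := Metric.isOpen_iff.mp hSopen x₀ hx₀S
  -- the bump
  set χ : ContDiffBump x₀ := ⟨ε/3, ε/2, by positivity, by linarith⟩ with hχ
  set φ : EuclideanSpace ℝ (Fin d) → ℝ := fun x => χ x * sd x with hφdef
  have hχout : χ.rOut = ε/2 := rfl
  have hχin : χ.rIn = ε/3 := rfl
  -- φ is smooth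
  have hφsmooth : ContDiff ℝ 2 φ := by
    rw [contDiff_iff_contDiffAt]
    intro x
    by_cases hx : x ∈ Metric.closedBall x₀ (ε/2)
    · have hxS : x ∈ S := hball (by
        simp only [Metric.mem_closedBall] at hx
        exact Metric.mem_ball.mpr (lt_of_le_of_lt hx (by linarith)))
      exact χ.contDiffAt.mul ((hsmoothAt x hxS).of_le (by exact_mod_cast le_top))
    · have hopen : IsOpen (Metric.closedBall x₀ (ε/2))ᶜ := isOpen_compl_iff.mpr Metric.isClosed_closedBall
      have hev : φ =ᶠ[nhds x] fun _ => 0 := by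
        filter_upwards [hopen.mem_nhds hx] with y hy
        have hy0 : χ y = 0 := by
          by_contra hne
          have : y ∈ Function.support χ := hne
          rw [χ.support_eq, hχout] at this
          exact hy (Metric.ball_subset_closedBall this)
        simp [hφdef, hy0]
      exact (contDiffAt_const (c := (0:ℝ))).congr_of_eventuallyEq hev
  -- φ = sd near x₀
  have hVmem : Metric.ball x₀ (ε/3) ∈ nhds x₀ := Metric.ball_mem_nhds _ (by positivity)
  have hVeq : ∀ y ∈ Metric.ball x₀ (ε/3), φ y = sd y := by
    intro y hy
    have : χ y = 1 := χ.one_of_mem_closedBall (by rw [hχin]; exact Metric.ball_subset_closedBall hy)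
    simp [hφdef, this]
  have hφev : φ =ᶠ[nhds x₀] sd := Filter.eventually_of_mem hVmem hVeq
  -- local min of u - φ
  have hmin : IsLocalMin (fun y => u y - φ y) x₀ := by
    apply htouch.congr
    filter_upwards [hφev] with y hy
    simp [hy]
  -- fderivs agree near x₀
  have hfe : ∀ᶠ y in nhds x₀, fderiv ℝ φ y = fderiv ℝ sd y := by
    filter_upwards [eventually_mem_nhds_iff.mpr hVmem] with y hy
    exact Filter.EventuallyEq.fderiv_eq (Filter.eventually_of_mem hy hVeq)
  have hfe0 : fderiv ℝ φ x₀ = fderiv ℝ sd x₀ := hfe.self_of_nhds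
  have hgrad : gradient φ x₀ = gradient sd x₀ := by
    unfold gradient; rw [hfe0]
  set v : EuclideanSpace ℝ (Fin d) := gradient sd x₀ with hv
  have hvnorm : ‖v‖ = 1 := hsd_eik x₀ hx₀S
  have hvne : v ≠ 0 := by intro h; rw [h] at hvnorm; simp at hvnorm
  -- second-order equalities
  have hsecond : ∀ w : EuclideanSpace ℝ (Fin d), fderiv ℝ (fun y => fderiv ℝ φ y w) x₀ =
      fderiv ℝ (fun y => fderiv ℝ sd y w) x₀ := by
    intro w
    apply Filter.EventuallyEq.fderiv_eq
    filter_upwards [hfe] with y hy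
    rw [hy]
  have hlap : lapE φ x₀ = lapE sd x₀ := by
    unfold lapE
    exact Finset.sum_congr rfl fun i _ => by rw [hsecond _]
  have hhess : ∀ w, hessQ φ x₀ w = hessQ sd x₀ w := by
    intro w; unfold hessQ; rw [hsecond w]
  -- the gradient map
  set g : EuclideanSpace ℝ (Fin d) → EuclideanSpace ℝ (Fin d) := fun y => gradient sd y with hg
  have hgdef : ∀ y, g y = (InnerProductSpace.toDual ℝ (EuclideanSpace ℝ (Fin d))).symm (fderiv ℝ sd y) := fun y => rfl
  have hgdiff : DifferentiableAt ℝ g x₀ := by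
    have h1 : ContDiffAt ℝ 1 (fderiv ℝ sd) x₀ := (hsmoothAt x₀ hx₀S).fderiv_right (by exact WithTop.coe_le_coe.mpr le_top)
    have h2 : DifferentiableAt ℝ (fderiv ℝ sd) x₀ := h1.differentiableAt (by norm_num)
    exact ((InnerProductSpace.toDual ℝ (EuclideanSpace ℝ (Fin d))).symm.toContinuousLinearMap.differentiableAt).comp x₀ h2
  -- fderiv sd y w = ⟪g y, w⟫
  have hinner : ∀ (y : EuclideanSpace ℝ (Fin d)) (w : EuclideanSpace ℝ (Fin d)), fderiv ℝ sd y w = ⟪g y, w⟫ := by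
    intro y w
    rw [hgdef, ← InnerProductSpace.toDual_apply_apply,
      (InnerProductSpace.toDual ℝ (EuclideanSpace ℝ (Fin d))).apply_symm_apply]
  -- eikonal : ⟪g y, g y⟫ = 1 near x₀
  have heik : (fun y => ⟪g y, g y⟫) =ᶠ[nhds x₀] fun _ => (1:ℝ) := by
    filter_upwards [hSopen.mem_nhds hx₀S] with y hy
    have := hsd_eik y hy
    rw [real_inner_self_eq_norm_sq]
    rw [hg]; simp only; rw [this]; norm_num
  have heik0 : fderiv ℝ (fun y => ⟪g y, g y⟫) x₀ = 0 := by
    rw [heik.fderiv_eq, fderiv_fun_const]; rfl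
  have hkey : ⟪fderiv ℝ g x₀ v, v⟫ = 0 := by
    have h1 : fderiv ℝ (fun y => ⟪g y, g y⟫) x₀ v =
        ⟪g x₀, fderiv ℝ g x₀ v⟫ + ⟪fderiv ℝ g x₀ v, g x₀⟫ :=
      fderiv_inner_apply ℝ hgdiff hgdiff v
    rw [heik0] at h1
    simp only [ContinuousLinearMap.zero_apply] at h1
    have h2 : g x₀ = v := rfl
    rw [h2, real_inner_comm (fderiv ℝ g x₀ v) v] at h1
    linarith
  -- hessQ sd x₀ v = 0
  have hhess0 : hessQ sd x₀ v = 0 := by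
    unfold hessQ
    have heq : (fun y => fderiv ℝ sd y v) = fun y => ⟪g y, v⟫ := funext fun y => hinner y v
    rw [heq]
    have h1 : fderiv ℝ (fun y => ⟪g y, v⟫) x₀ v =
        ⟪g x₀, fderiv ℝ (fun _ => v) x₀ v⟫ + ⟪fderiv ℝ g x₀ v, v⟫ :=
      fderiv_inner_apply ℝ hgdiff (differentiableAt_const v) v
    rw [fderiv_fun_const] at h1
    simpa [hkey] using h1
  -- apply hsup
  have hφcd : ContDiffOn ℝ 2 φ (Metric.ball x₀ r') := hφsmooth.contDiffOn
  have hx₀ball : x₀ ∈ Metric.ball x₀ r' := Metric.mem_ball_self hr'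
  have hgradne : gradient φ x₀ ≠ 0 := by rw [hgrad]; exact hvne
  have hmain := hsup φ hφcd x₀ hx₀ball hmin hgradne
  rw [hgrad] at hmain
  rw [hvnorm] at hmain
  rw [inv_one, one_smul, hlap, hhess _, hhess0, sub_zero] at hmain
  have hs := hstrict x₀ hx₀S
  linarith

end
end
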